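/- The number of ternary trees with m internal vertices equals (1/(2m+1)) * C(3m, m). -/

import Mathlib

/-!
Count forests instead of trees. A forest of `r + 1` trees with `m + 1` internal vertices either
starts with a leaf, followed by a forest of `r` trees with `m + 1` internal vertices, or starts
with a node, whose three subtrees together with the remaining `r` trees form a forest of `r + 3`
trees with `m` internal vertices. The numbers `r / (3m + r) * C(3m + r, m)` satisfy the same
recurrence and boundary values, and for `r = 1` they equal `1 / (2m + 1) * C(3m, m)`.
-/

/-- Ternary trees: the free algebra on one generator `leaf` with one ternary
operation `node`. -/
inductive TernaryTree : Type
  | leaf : TernaryTree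
  | node : TernaryTree → TernaryTree → TernaryTree → TernaryTree
deriving DecidableEq

namespace TernaryTree

/-- Number of internal vertices (applications of the ternary operation). -/
def internal : TernaryTree → ℕ
  | leaf => 0
  | node a b c => internal a + internal b + internal c + 1

/-- The dual of a ternary tree. -/
def dual : TernaryTree → TernaryTree
  | leaf => leaf
  | node a b c => node (dual c) (dual b) (dual a)

end TernaryTree

namespace TernaryTree

lemma internal_eq_zero_iff {t : TernaryTree} : t.internal = 0 ↔ t = leaf := by
  cases t <;> simp [internal]

abbrev Forest (r m : ℕ) : Type :=
  {l : List TernaryTree // l.length = r ∧ (l.map internal).sum = m}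

instance (r : ℕ) : Unique (Forest r 0) where
  default := ⟨List.replicate r leaf, by simp [internal]⟩
  uniq := by
    rintro ⟨l, hlen, hsum⟩
    simp only [List.sum_eq_zero_iff, List.mem_map, forall_exists_index, and_imp,
      forall_apply_eq_imp_iff₂, internal_eq_zero_iff] at hsum
    exact Subtype.ext (List.eq_replicate_iff.mpr ⟨hlen, hsum⟩)

instance (m : ℕ) : IsEmpty (Forest 0 (m + 1)) where
  false := by rintro ⟨l, hlen, hsum⟩; simp_all

def graft : List TernaryTree → List TernaryTree
  | a :: b :: c :: l => node a b c :: l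
  | l => l

lemma graft_injective_of_length {k : ℕ} {l l' : List TernaryTree} (h : l.length = k + 3)
    (h' : l'.length = k + 3) (heq : graft l = graft l') : l = l' := by
  match l, l', h, h' with
  | a :: b :: c :: l, a' :: b' :: c' :: l', _, _ =>
    simp_all [graft]

lemma graft_mem_forest {r m : ℕ} {l : List TernaryTree}
    (h : l.length = r + 3 ∧ (l.map internal).sum = m) :
    (graft l).length = r + 1 ∧ ((graft l).map internal).sum = m + 1 := by
  match l, h with
  | a :: b :: c :: l, ⟨hlen, hsum⟩ =>
    simp only [graft, List.length_cons, List.map_cons, List.sum_cons, internal] at hlen hsum ⊢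
    omega

def consOrGraft (r m : ℕ) : Forest r (m + 1) ⊕ Forest (r + 3) m → Forest (r + 1) (m + 1)
  | .inl l => ⟨leaf :: l.1, by simpa [internal] using l.2⟩
  | .inr l => ⟨graft l.1, graft_mem_forest l.2⟩

lemma consOrGraft_bijective (r m : ℕ) : Function.Bijective (consOrGraft r m) := by
  constructor
  · rintro (⟨l, hl⟩ | ⟨l, hl⟩) (⟨l', hl'⟩ | ⟨l', hl'⟩) heq <;>
      simp only [consOrGraft, Subtype.mk.injEq, List.cons.injEq] at heq
    · simp [heq.2]
    · match l', hl'.1 with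
      | a :: b :: c :: l', _ => simp [graft] at heq
    · match l, hl.1 with
      | a :: b :: c :: l, _ => simp [graft] at heq
    · simp [graft_injective_of_length hl.1 hl'.1 heq]
  · rintro ⟨_ | ⟨_ | ⟨a, b, c⟩, l⟩, hlen, hsum⟩
    · simp at hlen
    · exact ⟨.inl ⟨l, by simpa [internal] using And.intro hlen hsum⟩, rfl⟩
    · refine ⟨.inr ⟨a :: b :: c :: l, ?_⟩, rfl⟩
      simp only [List.length_cons, List.map_cons, List.sum_cons, internal] at hlen hsum ⊢
      omega

instance finite_forest : ∀ r m, Finite (Forest r m)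
  | _, 0 => inferInstance
  | 0, _ + 1 => inferInstance
  | r + 1, m + 1 =>
    have := finite_forest r (m + 1)
    have := finite_forest (r + 3) m
    .of_surjective _ (consOrGraft_bijective r m).2
termination_by r m => (m, r)

theorem card_forest : ∀ r m, (3 * m + r) * Nat.card (Forest r m) = r * (3 * m + r).choose m
  | r, 0 => by simp
  | 0, m + 1 => by simp
  | r + 1, m + 1 => by
    have hleaf := card_forest r (m + 1)
    have hroot := card_forest (r + 3) m
    have hchoose := Nat.choose_succ_right_eq (3 * m + r + 3) m
    rw [← Nat.card_eq_of_bijective _ (consOrGraft_bijective r m), Nat.card_sum,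
      show 3 * (m + 1) + (r + 1) = 3 * m + r + 3 + 1 by ring, Nat.choose_succ_succ']
    rw [show 3 * (m + 1) + r = 3 * m + r + 3 by ring] at hleaf
    rw [show 3 * m + (r + 3) = 3 * m + r + 3 by ring] at hroot
    rw [show 3 * m + r + 3 - m = 2 * m + r + 3 by omega] at hchoose
    apply Nat.eq_of_mul_eq_mul_left (show 0 < 3 * m + r + 3 by omega)
    linear_combination (3 * m + r + 4) * (hleaf + hroot) - 3 * hchoose
termination_by r m => (m, r)

lemma card_internal_eq_card_forest_one (m : ℕ) :
    Nat.card {t : TernaryTree // t.internal = m} = Nat.card (Forest 1 m) := by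
  refine Nat.card_eq_of_bijective (fun t => ⟨[t.1], by simp [t.2]⟩) ⟨?_, ?_⟩
  · exact fun t t' h => Subtype.ext (by simpa using h)
  · rintro ⟨l, hlen, hsum⟩
    obtain ⟨t, rfl⟩ := List.length_eq_one_iff.mp hlen
    exact ⟨⟨t, by simpa using hsum⟩, rfl⟩

end TernaryTree

/-- The number of ternary trees with `m` internal vertices equals
`(1/(2m+1)) * C(3m, m)`. -/
theorem ternary_count (m : ℕ) :
    (2 * m + 1) * Nat.card {t : TernaryTree // t.internal = m} = Nat.choose (3 * m) m := by
  have hforest := TernaryTree.card_forest 1 m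
  rw [← TernaryTree.card_internal_eq_card_forest_one, one_mul] at hforest
  have hchoose := Nat.choose_mul_succ_eq (3 * m) m
  rw [show 3 * m + 1 - m = 2 * m + 1 by omega] at hchoose
  apply Nat.eq_of_mul_eq_mul_left (show 0 < 3 * m + 1 by omega)
  linear_combination (2 * m + 1) * hforest - hchoose
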